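/- Assume s ≥ 2t, let r be an integer with 1 ≤ r ≤ t−2 and 2(r+1) = s−t+1, and let w ∈ R be an invertible power series. Then every monomial of total degree r+2 in the variables x₁,…,x_h, with the possible exceptions of x₁^{r+2} and x₁^{r+1} x₂, lies in the ideal I_{r,w} + n^{3r+2}. -/

import Mathlib

noncomputable section

open MvPowerSeries

/-- The maximal ideal `(x₁, …, x_h)` of the power series ring. -/
def nIdeal (k : Type*) [Field k] (h : ℕ) : Ideal (MvPowerSeries (Fin h) k) :=
  Ideal.span (Set.range (X : Fin h → MvPowerSeries (Fin h) k))

/-- The ideal generated (in terms of a system of generators `y`) by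
`y i * y j` (`i < j`, `(i,j) ≠ (0,1)`), `y j ^ 2 - y 0 ^ s` (`j ≥ 2`),
`y 1 ^ 2 - y 0 ^ (p+1) * y 1 - w * y 0 ^ (s - t + 1)` and `y 0 ^ t * y 1`. -/
def Iy (k : Type*) [Field k] (n s t p : ℕ) (w : MvPowerSeries (Fin (n + 2)) k)
    (y : Fin (n + 2) → MvPowerSeries (Fin (n + 2)) k) :
    Ideal (MvPowerSeries (Fin (n + 2)) k) :=
  Ideal.span
    ({f | ∃ i j : Fin (n + 2), i < j ∧ (i, j) ≠ (0, 1) ∧ f = y i * y j} ∪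
     {f | ∃ j : Fin (n + 2), 2 ≤ (j : ℕ) ∧ f = y j ^ 2 - y 0 ^ s} ∪
     {y 1 ^ 2 - y 0 ^ (p + 1) * y 1 - w * y 0 ^ (s - t + 1), y 0 ^ t * y 1})

/-- The ideal `I_{p,z}`. -/
def Ipz (k : Type*) [Field k] (n s t p : ℕ) (z : MvPowerSeries (Fin (n + 2)) k) :
    Ideal (MvPowerSeries (Fin (n + 2)) k) :=
  Iy k n s t p z X

/-- The ideal `I_a`. -/
def Ia (k : Type*) [Field k] (n s t : ℕ) (a : MvPowerSeries (Fin (n + 2)) k) :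
    Ideal (MvPowerSeries (Fin (n + 2)) k) :=
  Ideal.span
    ({f | ∃ i j : Fin (n + 2), i < j ∧ (i, j) ≠ (0, 1) ∧ f = X i * X j} ∪
     {f | ∃ j : Fin (n + 2), 2 ≤ (j : ℕ) ∧ f = X j ^ 2 - X 0 ^ s} ∪
     {X 1 ^ 2 - a * X 0 * X 1 - X 0 ^ (s - t + 1), X 0 ^ t * X 1})

/-- Two ideals are isomorphic iff the quotient `k`-algebras are isomorphic. -/
def IdealIso (k : Type*) [Field k] {h : ℕ} (I J : Ideal (MvPowerSeries (Fin h) k)) : Prop :=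
  Nonempty ((MvPowerSeries (Fin h) k ⧸ I) ≃ₐ[k] (MvPowerSeries (Fin h) k ⧸ J))

/-- The ideal `(x₂, …, x_h)`. -/
def offIdeal (k : Type*) [Field k] (n : ℕ) : Ideal (MvPowerSeries (Fin (n + 2)) k) :=
  Ideal.span {f | ∃ i : Fin (n + 2), i ≠ 0 ∧ f = X i}

end

/-!
Write `x₁, x₂, …` for `X 0, X 1, …` and `I = I_{r,w}`; note `s - t + 1 = 2(r+1)` and `t ≤ 2r + 1`.
Modulo `I`, `x₂² ≡ x₁^{r+1} x₂ + w x₁^{2r+2}`. Applied to `x₁^a x₂^b` with `b ≥ 2` and `a + b ≥ r + 2`,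
this lowers the power of `x₂` by one and raises that of `x₁` by `r + 1`, preserving `a + b ≥ r + 2`,
plus a term of degree `a + b + 2r ≥ 3r + 2`. The last step, from `b = 2` (so `a ≥ r`), yields
`x₁^{a+r+1} x₂` with `a + r + 1 ≥ 2r + 1 ≥ t`, a multiple of `x₁^t x₂ ∈ I`.
Every other monomial of degree `r + 2 ≥ 3` is a multiple of some `x_i x_j ∈ I` or of
`x_j³ = x_j (x_j² - x₁^s) + x₁^{s-1} (x₁ x_j)` with `j ≥ 3`.
-/

open MvPowerSeries

section

variable {R : Type*} [CommRing R] {J : Ideal R} {x y w : R} {r t : ℕ}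

theorem pow_mul_pow_mem_pow (hx : x ∈ J) (hy : y ∈ J) {a b N : ℕ} (hN : N ≤ a + b) :
    x ^ a * y ^ b ∈ J ^ N :=
  Ideal.pow_le_pow_right hN (pow_add J a b ▸ Ideal.mul_mem_mul (Ideal.pow_mem_pow hx a)
    (Ideal.pow_mem_pow hy b))

theorem pow_mul_pow_add_two_mem (hq : y ^ 2 - x ^ (r + 1) * y - w * x ^ (2 * (r + 1)) ∈ J)
    (ht : x ^ t * y ∈ J) (htr : t ≤ 2 * r + 1)
    (hdeg : ∀ a b, 3 * r + 2 ≤ a + b → x ^ a * y ^ b ∈ J) {a c : ℕ} (ha : r ≤ a + c) :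
    x ^ a * y ^ (c + 2) ∈ J := by
  induction c generalizing a with
  | zero =>
    have hsplit : x ^ a * y ^ 2 = x ^ a * (y ^ 2 - x ^ (r + 1) * y - w * x ^ (2 * (r + 1)))
        + x ^ (a + r + 1 - t) * (x ^ t * y) + w * (x ^ (a + 2 * (r + 1)) * y ^ 0) := by
      rw [← mul_assoc, ← pow_add, Nat.sub_add_cancel (by omega)]
      ring
    rw [hsplit]
    exact J.add_mem (J.add_mem (J.mul_mem_left _ hq) (J.mul_mem_left _ ht))
      (J.mul_mem_left _ (hdeg _ _ (by omega)))
  | succ c ih =>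
    have hsplit : x ^ a * y ^ (c + 1 + 2)
        = x ^ a * y ^ (c + 1) * (y ^ 2 - x ^ (r + 1) * y - w * x ^ (2 * (r + 1)))
          + x ^ (a + (r + 1)) * y ^ (c + 2) + w * (x ^ (a + 2 * (r + 1)) * y ^ (c + 1)) := by
      ring
    rw [hsplit]
    exact J.add_mem (J.add_mem (J.mul_mem_left _ hq) (ih (by omega)))
      (J.mul_mem_left _ (hdeg _ _ (by omega)))

end

theorem MvPowerSeries.monomial_one_mem_of_le {σ R : Type*} [CommSemiring R]
    {I : Ideal (MvPowerSeries σ R)} {e m : σ →₀ ℕ} (hem : e ≤ m) (he : monomial e (1 : R) ∈ I) :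
    monomial m (1 : R) ∈ I := by
  rw [← tsub_add_cancel_of_le hem, ← one_mul (1 : R), ← monomial_mul_monomial]
  exact I.mul_mem_left _ he

section Ipz

variable {k : Type*} [Field k] {n s t p : ℕ} {z : MvPowerSeries (Fin (n + 2)) k}

theorem X_mul_X_mem_Ipz {i j : Fin (n + 2)} (hij : i < j) (h : (i, j) ≠ (0, 1)) :
    X i * X j ∈ Ipz k n s t p z :=
  Ideal.subset_span (Or.inl (Or.inl ⟨i, j, hij, h, rfl⟩))

theorem X_sq_sub_mem_Ipz {j : Fin (n + 2)} (hj : 2 ≤ (j : ℕ)) :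
    X j ^ 2 - X 0 ^ s ∈ Ipz k n s t p z :=
  Ideal.subset_span (Or.inl (Or.inr ⟨j, hj, rfl⟩))

theorem X_one_sq_sub_mem_Ipz :
    X 1 ^ 2 - X 0 ^ (p + 1) * X 1 - z * X 0 ^ (s - t + 1) ∈ Ipz k n s t p z :=
  Ideal.subset_span (Or.inr (Set.mem_insert _ _))

theorem X_zero_pow_mul_X_one_mem_Ipz : X 0 ^ t * X 1 ∈ Ipz k n s t p z :=
  Ideal.subset_span (Or.inr (Set.mem_insert_of_mem _ rfl))

theorem X_mul_X_mem_Ipz_of_two_le {i j : Fin (n + 2)} (hij : i ≠ j) (hj : 2 ≤ (j : ℕ)) :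
    X i * X j ∈ Ipz k n s t p z := by
  have hj1 : j ≠ 1 := fun h => by simp [h] at hj
  rcases hij.lt_or_gt with hlt | hgt
  · exact X_mul_X_mem_Ipz hlt fun h => hj1 (Prod.ext_iff.mp h).2
  · have hi1 : i ≠ 1 := fun h => by rw [h, Fin.lt_def, Fin.val_one] at hgt; omega
    rw [mul_comm]
    exact X_mul_X_mem_Ipz hgt fun h => hi1 (Prod.ext_iff.mp h).2

theorem X_pow_three_mem_Ipz (hs : 1 ≤ s) {j : Fin (n + 2)} (hj : 2 ≤ (j : ℕ)) :
    X j ^ 3 ∈ Ipz k n s t p z := by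
  have hj0 : (0 : Fin (n + 2)) ≠ j := fun h => by simp [← h] at hj
  have hsplit : (X j : MvPowerSeries (Fin (n + 2)) k) ^ 3
      = X j * (X j ^ 2 - X 0 ^ s) + X 0 ^ (s - 1) * (X 0 * X j) := by
    rw [← mul_assoc, ← pow_succ, Nat.sub_add_cancel hs]
    ring
  rw [hsplit]
  exact Ideal.add_mem _ (Ideal.mul_mem_left _ _ (X_sq_sub_mem_Ipz hj))
    (Ideal.mul_mem_left _ _ (X_mul_X_mem_Ipz_of_two_le hj0 hj))

theorem monomial_mem_Ipz_of_apply_ne_zero (hs : 1 ≤ s) {m : Fin (n + 2) →₀ ℕ}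
    (hm : 3 ≤ m.degree) {j : Fin (n + 2)} (hj : 2 ≤ (j : ℕ)) (hmj : m j ≠ 0) :
    monomial m (1 : k) ∈ Ipz k n s t p z := by
  by_cases hi : ∃ i ≠ j, m i ≠ 0
  · obtain ⟨i, hij, hmi⟩ := hi
    refine monomial_one_mem_of_le (e := Finsupp.single i 1 + Finsupp.single j 1) ?_ ?_
    · intro a
      simp only [Finsupp.coe_add, Pi.add_apply, Finsupp.single_apply]
      split_ifs <;> subst_vars <;> omega
    · rw [← one_mul (1 : k), ← monomial_mul_monomial, ← X_def, ← X_def]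
      exact X_mul_X_mem_Ipz_of_two_le hij hj
  · push Not at hi
    have hdeg : m.degree = m j := by
      rw [Finsupp.degree_eq_sum, Finset.sum_eq_single j (fun i _ h => hi i h) (by simp)]
    refine monomial_one_mem_of_le (e := Finsupp.single j 3) ?_ ?_
    · intro a
      simp only [Finsupp.single_apply]
      split_ifs <;> subst_vars <;> omega
    · rw [← X_pow_eq]
      exact X_pow_three_mem_Ipz hs hj

theorem X_zero_pow_mul_X_one_pow_mem_Ipz_sup {r : ℕ} (hr : 2 * (r + 1) = s - t + 1)
    (htr : t ≤ 2 * r + 1) {a c : ℕ} (hac : r ≤ a + c) :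
    X 0 ^ a * X 1 ^ (c + 2) ∈ Ipz k n s t r z ⊔ nIdeal k (n + 2) ^ (3 * r + 2) := by
  have hX : ∀ i, (X i : MvPowerSeries (Fin (n + 2)) k) ∈ nIdeal k (n + 2) :=
    fun i => Ideal.subset_span ⟨i, rfl⟩
  refine pow_mul_pow_add_two_mem (w := z) ?_ ?_ htr
    (fun a b hab => Submodule.mem_sup_right (pow_mul_pow_mem_pow (hX 0) (hX 1) hab)) hac
  · exact Submodule.mem_sup_left (hr ▸ X_one_sq_sub_mem_Ipz)
  · exact Submodule.mem_sup_left X_zero_pow_mul_X_one_mem_Ipz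

end Ipz

theorem Finsupp.eq_single_zero_add_single_one {n : ℕ} {m : Fin (n + 2) →₀ ℕ}
    (h : ∀ j : Fin (n + 2), 2 ≤ (j : ℕ) → m j = 0) :
    m = Finsupp.single 0 (m 0) + Finsupp.single 1 (m 1) := by
  ext ⟨_ | _ | a, ha⟩
  · simp
  · simp
  · simp [Fin.ext_iff, h ⟨a + 2, ha⟩ (by simp)]

open MvPowerSeries in
theorem stmt_14_general {k : Type*} [Field k] (n s t : ℕ)
    (hst : t + 1 ≤ s) (h2t : 2 * t ≤ s)
    (r : ℕ) (hr1 : 1 ≤ r) (hr3 : 2 * (r + 1) = s - t + 1)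
    (w : MvPowerSeries (Fin (n + 2)) k)
    (m : Fin (n + 2) →₀ ℕ) (hdeg : (m.sum fun _ e => e) = r + 2)
    (hne1 : m ≠ Finsupp.single 0 (r + 2))
    (hne2 : m ≠ Finsupp.single 0 (r + 1) + Finsupp.single 1 1) :
    (monomial m 1 : MvPowerSeries (Fin (n + 2)) k) ∈
      Ipz k n s t r w + (nIdeal k (n + 2)) ^ (3 * r + 2) := by
  change m.degree = r + 2 at hdeg
  rw [Submodule.add_eq_sup]
  by_cases hj : ∃ j : Fin (n + 2), 2 ≤ (j : ℕ) ∧ m j ≠ 0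
  · obtain ⟨j, hj, hmj⟩ := hj
    exact Submodule.mem_sup_left
      (monomial_mem_Ipz_of_apply_ne_zero (by omega) (by omega) hj hmj)
  push Not at hj
  rw [Finsupp.eq_single_zero_add_single_one hj] at hdeg hne1 hne2 ⊢
  generalize m 0 = a, m 1 = b at hdeg hne1 hne2 ⊢
  simp only [map_add, Finsupp.degree_single] at hdeg
  obtain ⟨c, rfl⟩ : ∃ c, b = c + 2 := by
    rcases b with _ | _ | c
    · exact absurd (by rw [Finsupp.single_zero, add_zero, show a = r + 2 by omega]) hne1
    · exact absurd (by rw [show a = r + 1 by omega]) hne2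
    · exact ⟨c, rfl⟩
  have hmonomial : (X 0 ^ a * X 1 ^ (c + 2) : MvPowerSeries (Fin (n + 2)) k)
      = monomial (Finsupp.single 0 a + Finsupp.single 1 (c + 2)) 1 := by
    rw [X_pow_eq, X_pow_eq, monomial_mul_monomial, one_mul]
  exact hmonomial ▸ X_zero_pow_mul_X_one_pow_mem_Ipz_sup hr3 (by omega) (by omega)

open MvPowerSeries in
/-- If `s ≥ 2t`, `1 ≤ r ≤ t - 2`, `2(r+1) = s - t + 1` and `w` is invertible, then every
monomial of total degree `r + 2`, except possibly `x₁^{r+2}` and `x₁^{r+1} x₂`, lies in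
`I_{r,w} + n^{3r+2}`. -/
theorem stmt_14 {k : Type*} [Field k] [IsAlgClosed k] [CharZero k] (n s t : ℕ)
    (hst : t + 1 ≤ s) (ht : 3 ≤ t + 1) (h2t : 2 * t ≤ s)
    (r : ℕ) (hr1 : 1 ≤ r) (hr2 : r ≤ t - 2) (hr3 : 2 * (r + 1) = s - t + 1)
    (w : MvPowerSeries (Fin (n + 2)) k) (hw : IsUnit w)
    (m : Fin (n + 2) →₀ ℕ) (hdeg : (m.sum fun _ e => e) = r + 2)
    (hne1 : m ≠ Finsupp.single 0 (r + 2))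
    (hne2 : m ≠ Finsupp.single 0 (r + 1) + Finsupp.single 1 1) :
    (monomial m 1 : MvPowerSeries (Fin (n + 2)) k) ∈
      Ipz k n s t r w + (nIdeal k (n + 2)) ^ (3 * r + 2) :=
  stmt_14_general n s t hst h2t r hr1 hr3 w m hdeg hne1 hne2
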